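/- ('Prepare to puncture' estimate) Let ω be a positive locally finite Borel measure on ℝⁿ, let K be a dyadic cube, let p ∈ ℝⁿ, and set ω̃ := ω − ω({p}) δ_p. Then ‖Δ_K^ω x‖²_{L²(ω)} ≤ n · ℓ(K)² · ω̃(K), where x denotes the identity map of ℝⁿ. Consequently, for any at most countable set 𝔓 ⊆ ℝⁿ whose atoms in K have ω-masses attaining their supremum, ‖Δ_K^ω x‖²_{L²(ω)} ≤ n · ℓ(K)² · ω(K, 𝔓), where ω(K, 𝔓) := ω(K) − sup{ω({q}) : q ∈ K ∩ 𝔓} (the sup of the empty set being 0). -/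

import Mathlib

open MeasureTheory
open scoped ENNReal NNReal

noncomputable section

/-- An axis-parallel half-open cube in `ℝⁿ`, given by its corner `a` and side length `l`. -/
structure QCube (n : ℕ) where
  a : Fin n → ℝ
  l : ℝ

/-- The half-open cube as a subset of `ℝⁿ`. -/
def QCube.pts {n : ℕ} (Q : QCube n) : Set (EuclideanSpace ℝ (Fin n)) :=
  {x | ∀ i, Q.a i ≤ x i ∧ x i < Q.a i + Q.l}

/-- The dyadic child of a cube indexed by `e ∈ {0,1}ⁿ`. -/
def QCube.child {n : ℕ} (Q : QCube n) (e : Fin n → Bool) : QCube n :=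
  ⟨fun i => Q.a i + (if e i then Q.l / 2 else 0), Q.l / 2⟩

/-- The dyadic grid on `ℝⁿ` obtained by translating the standard grid by `t`. -/
def dyadicGrid {n : ℕ} (t : Fin n → ℝ) : Set (QCube n) :=
  {Q | ∃ (k : ℤ) (m : Fin n → ℤ),
    Q = ⟨fun i => t i + (2:ℝ) ^ (-k) * (m i : ℝ), (2:ℝ) ^ (-k)⟩}

/-- `E_S^μ f`, the `μ`-average of `f` over `S` (junk value `0` when `μ(S)` is `0` or `∞`). -/
def muAvg {n : ℕ} (μ : Measure (EuclideanSpace ℝ (Fin n)))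
    (S : Set (EuclideanSpace ℝ (Fin n))) (f : EuclideanSpace ℝ (Fin n) → ℝ) : ℝ :=
  (μ S).toReal⁻¹ * ∫ x in S, f x ∂μ

/-- The martingale difference `Δ_I^μ f = Σ_{I' child of I} 1_{I'} E_{I'}^μ f − 1_I E_I^μ f`. -/
def mdiff {n : ℕ} (μ : Measure (EuclideanSpace ℝ (Fin n))) (I : QCube n)
    (f : EuclideanSpace ℝ (Fin n) → ℝ) (x : EuclideanSpace ℝ (Fin n)) : ℝ :=
  (∑ e : Fin n → Bool,
      Set.indicator (I.child e).pts (fun _ => muAvg μ (I.child e).pts f) x)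
    - Set.indicator I.pts (fun _ => muAvg μ I.pts f) x

/-- `‖Δ_I^μ x‖²_{L²(μ)} = Σᵢ ∫ (Δ_I^μ xᵢ)² dμ`, for the identity map `x` of `ℝⁿ`. -/
def energyTerm {n : ℕ} (μ : Measure (EuclideanSpace ℝ (Fin n))) (I : QCube n) : ℝ≥0∞ :=
  ∑ i : Fin n, ∫⁻ x, ENNReal.ofReal ((mdiff μ I (fun z => z i) x) ^ 2) ∂μ

/-!
On `K`, the function `g = Δ_K^ω xᵢ` has `ω`-mean zero, and at `ω`-a.e. point `x ∈ K` it equals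
`E_{K'}^ω xᵢ − E_K^ω xᵢ` for the child `K' ∋ x`, which has positive mass; so `g` takes values in an
interval of length `ℓ(K)`. Having mean zero, `g` satisfies `∫ g² ≤ ∫ (g − c)²` for every constant
`c`. Taking `c = g(p)` when `p` is an atom (then `c` lies in the same interval) removes the
contribution of `{p}` and leaves at most `ℓ(K)² ω(K ∖ {p})`. The second estimate is the first one
at an atom `q` of maximal mass.
-/
open Set

namespace QCube

variable {n : ℕ} (Q : QCube n)

lemma pts_eq_preimage_pi :
    Q.pts = WithLp.ofLp ⁻¹' univ.pi fun i => Ico (Q.a i) (Q.a i + Q.l) := by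
  ext x; simp [QCube.pts]

lemma measurableSet_pts : MeasurableSet Q.pts := by
  rw [pts_eq_preimage_pi]
  exact (WithLp.measurable_ofLp _ _) (MeasurableSet.univ_pi fun _ => measurableSet_Ico)

lemma isBounded_pts : Bornology.IsBounded Q.pts := by
  refine ((isCompact_Icc (a := Q.a) (b := Q.a + fun _ => Q.l)).image
    (PiLp.continuous_toLp 2 _)).isBounded.subset fun x hx => ⟨x.ofLp, ?_, rfl⟩
  exact ⟨fun i => (hx i).1, fun i => (hx i).2.le⟩

lemma integrableOn_pts_of_continuous {μ : Measure (EuclideanSpace ℝ (Fin n))}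
    [IsLocallyFiniteMeasure μ] {f : EuclideanSpace ℝ (Fin n) → ℝ} (hf : Continuous f) :
    IntegrableOn f Q.pts μ :=
  (hf.continuousOn.integrableOn_compact Q.isBounded_pts.isCompact_closure).mono_set subset_closure

def childIndex (x : EuclideanSpace ℝ (Fin n)) : Fin n → Bool :=
  fun i => decide (Q.a i + Q.l / 2 ≤ x i)

variable {Q}

lemma mem_child_childIndex {x : EuclideanSpace ℝ (Fin n)} (hx : x ∈ Q.pts) :
    x ∈ (Q.child (Q.childIndex x)).pts := by
  intro i
  obtain ⟨h1, h2⟩ := hx i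
  by_cases hc : Q.a i + Q.l / 2 ≤ x i <;>
    refine ⟨?_, ?_⟩ <;> simp [QCube.child, childIndex, hc] <;> linarith

lemma eq_childIndex_of_mem_child {x : EuclideanSpace ℝ (Fin n)} {e : Fin n → Bool}
    (hx : x ∈ (Q.child e).pts) : e = Q.childIndex x := by
  funext i
  obtain ⟨h1, h2⟩ := hx i
  by_cases he : e i <;>
    simp only [QCube.child, he, if_true, Bool.false_eq_true, if_false] at h1 h2 <;>
    simp [childIndex, he] <;> linarith

lemma child_pts_subset (e : Fin n → Bool) : (Q.child e).pts ⊆ Q.pts := by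
  intro x hx i
  obtain ⟨h1, h2⟩ := hx i
  by_cases he : e i <;>
    simp only [QCube.child, he, if_true, Bool.false_eq_true, if_false] at h1 h2 <;>
    constructor <;> linarith

variable (Q)

lemma pairwise_disjoint_child_pts : Pairwise (Function.onFun Disjoint fun e => (Q.child e).pts) :=
  fun _ _ hne => disjoint_left.2 fun _ hx hx' =>
    hne ((eq_childIndex_of_mem_child hx).trans (eq_childIndex_of_mem_child hx').symm)

lemma iUnion_child_pts : ⋃ e, (Q.child e).pts = Q.pts :=
  (iUnion_subset child_pts_subset).antisymm fun _ hx => mem_iUnion.2 ⟨_, mem_child_childIndex hx⟩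

end QCube

section Averages

variable {n : ℕ} {μ : Measure (EuclideanSpace ℝ (Fin n))} {S : Set (EuclideanSpace ℝ (Fin n))}
  {f : EuclideanSpace ℝ (Fin n) → ℝ}

lemma muAvg_eq_setAverage : muAvg μ S f = ⨍ x in S, f x ∂μ := by
  rw [setAverage_eq, muAvg, measureReal_def, smul_eq_mul]

lemma integral_indicator_muAvg (hS : MeasurableSet S) (hfin : μ S ≠ ⊤) :
    ∫ x, S.indicator (fun _ => muAvg μ S f) x ∂μ = ∫ x in S, f x ∂μ := by
  rw [integral_indicator_const _ hS, muAvg_eq_setAverage, measure_smul_setAverage _ hfin]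

lemma muAvg_mem_Icc {a b : ℝ} (h0 : μ S ≠ 0) (hfin : μ S ≠ ⊤) (hf : IntegrableOn f S μ)
    (hS : MeasurableSet S) (hfS : ∀ x ∈ S, f x ∈ Icc a b) : muAvg μ S f ∈ Icc a b := by
  rw [muAvg_eq_setAverage]
  exact (convex_Icc a b).set_average_mem isClosed_Icc h0 hfin
    ((ae_restrict_iff' hS).2 (.of_forall hfS)) hf

end Averages

namespace QCube

variable {n : ℕ} {μ : Measure (EuclideanSpace ℝ (Fin n))} {Q : QCube n}
  {f : EuclideanSpace ℝ (Fin n) → ℝ} {x : EuclideanSpace ℝ (Fin n)}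

lemma mdiff_of_mem (hx : x ∈ Q.pts) :
    mdiff μ Q f x = muAvg μ (Q.child (Q.childIndex x)).pts f - muAvg μ Q.pts f := by
  rw [mdiff, indicator_of_mem hx, Finset.sum_eq_single_of_mem _ (Finset.mem_univ _)
    fun e _ he => indicator_of_notMem (fun hm => he (eq_childIndex_of_mem_child hm)) _,
    indicator_of_mem (mem_child_childIndex hx)]

lemma mdiff_of_notMem (hx : x ∉ Q.pts) : mdiff μ Q f x = 0 := by
  rw [mdiff, indicator_of_notMem hx, sub_zero]
  exact Finset.sum_eq_zero fun e _ => indicator_of_notMem (fun hm => hx (child_pts_subset e hm)) _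

variable (μ Q f)

lemma measurable_mdiff : Measurable (mdiff μ Q f) :=
  (Finset.measurable_sum _ fun _ _ => measurable_const.indicator (measurableSet_pts _)).sub
    (measurable_const.indicator (measurableSet_pts _))

lemma integral_mdiff [IsLocallyFiniteMeasure μ] (hf : IntegrableOn f Q.pts μ) :
    ∫ x, mdiff μ Q f x ∂μ = 0 := by
  have hfin : ∀ R : QCube n, μ R.pts ≠ ⊤ := fun R => R.isBounded_pts.measure_lt_top.ne
  have hint : ∀ R : QCube n, Integrable (R.pts.indicator fun _ => muAvg μ R.pts f) μ :=
    fun R => (integrable_indicator_iff (measurableSet_pts R)).2 (integrableOn_const (hfin R))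
  simp only [mdiff]
  rw [integral_sub (integrable_finsetSum _ fun _ _ => hint _) (hint Q),
    integral_finsetSum _ fun _ _ => hint _]
  simp only [integral_indicator_muAvg (measurableSet_pts _) (hfin _)]
  rw [← integral_iUnion_fintype (fun e => measurableSet_pts _) (pairwise_disjoint_child_pts Q)
    fun e => hf.mono_set (child_pts_subset e), iUnion_child_pts, sub_self]

end QCube

section MeanZero

variable {α : Type*} [MeasurableSpace α] {μ : Measure α} [IsFiniteMeasure μ] {g : α → ℝ}
  {a l : ℝ}

lemma integral_sq_le_integral_sub_sq (hg : MemLp g 2 μ) (h0 : ∫ x, g x ∂μ = 0) (c : ℝ) :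
    ∫ x, g x ^ 2 ∂μ ≤ ∫ x, (g x - c) ^ 2 ∂μ := by
  have h1 := hg.integrable one_le_two
  have hexp : ∫ x, (g x - c) ^ 2 ∂μ =
      ∫ x, g x ^ 2 ∂μ - 2 * c * ∫ x, g x ∂μ + c ^ 2 * μ.real univ := by
    have hfun : (fun x => (g x - c) ^ 2) = fun x => (g x ^ 2 - 2 * c * g x) + c ^ 2 := by
      funext x; ring
    have hi : Integrable (fun x => g x ^ 2 - 2 * c * g x) μ := hg.integrable_sq.sub (h1.const_mul _)
    rw [hfun, integral_add hi (integrable_const _),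
      integral_sub hg.integrable_sq (h1.const_mul _), integral_const_mul, integral_const,
      smul_eq_mul, mul_comm (μ.real univ)]
  rw [hexp, h0]
  nlinarith [measureReal_nonneg (μ := μ) (s := univ), sq_nonneg c]

lemma memLp_two_of_ae_mem_Icc (hgm : AEStronglyMeasurable g μ)
    (hg : ∀ᵐ x ∂μ, g x ∈ Icc a (a + l)) : MemLp g 2 μ :=
  .of_bound hgm (|a| + |l|) <| hg.mono fun x hx => by
    rw [Real.norm_eq_abs, abs_le]
    constructor <;> linarith [hx.1, hx.2, neg_abs_le a, le_abs_self a, abs_nonneg l, le_abs_self l]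

variable [MeasurableSingletonClass α]

lemma integral_sq_le_of_ae_mem_Icc (hgm : AEStronglyMeasurable g μ)
    (hg : ∀ᵐ x ∂μ, g x ∈ Icc a (a + l)) (h0 : ∫ x, g x ∂μ = 0) (p : α) :
    ∫ x, g x ^ 2 ∂μ ≤ l ^ 2 * μ.real {p}ᶜ := by
  have hL2 := memLp_two_of_ae_mem_Icc hgm hg
  -- `g p` is an admissible centre when `p` is an atom; otherwise `{p}` is null.
  set c := if μ {p} = 0 then a else g p with hc_def
  have hc : μ {p} ≠ 0 → g p ∈ Icc a (a + l) := fun hp => by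
    by_contra hgp
    exact hp (measure_mono_null (singleton_subset_iff.2 hgp) (ae_iff.1 hg))
  have hcp : ∀ᵐ x ∂μ, x = p → g x = c := by
    by_cases hp : μ {p} = 0
    · filter_upwards [measure_eq_zero_iff_ae_notMem.1 hp] with x hx hxp using absurd hxp hx
    · exact .of_forall fun x hxp => by rw [hc_def, if_neg hp, hxp]
  have hbound : ∀ᵐ x ∂μ, (g x - c) ^ 2 ≤ ({p}ᶜ : Set α).indicator (fun _ => l ^ 2) x := by
    filter_upwards [hg, hcp] with x hx hxc
    by_cases hxp : x = p
    · rw [hxc hxp, sub_self, indicator_of_notMem (by simp [hxp])]; simp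
    · rw [indicator_of_mem hxp]
      have hcI : c ∈ Icc a (a + l) := by
        rw [hc_def]
        split_ifs with hp
        exacts [⟨le_rfl, hx.1.trans hx.2⟩, hc hp]
      nlinarith [hx.1, hx.2, hcI.1, hcI.2]
  calc ∫ x, g x ^ 2 ∂μ ≤ ∫ x, (g x - c) ^ 2 ∂μ := integral_sq_le_integral_sub_sq hL2 h0 c
    _ ≤ ∫ x, ({p}ᶜ : Set α).indicator (fun _ => l ^ 2) x ∂μ :=
      integral_mono_ae (hL2.sub (memLp_const c)).integrable_sq
        ((integrable_const _).indicator (measurableSet_singleton p).compl) hbound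
    _ = l ^ 2 * μ.real {p}ᶜ := by
      rw [integral_indicator_const _ (measurableSet_singleton p).compl, smul_eq_mul, mul_comm]

lemma lintegral_sq_le_of_ae_mem_Icc (hgm : AEStronglyMeasurable g μ)
    (hg : ∀ᵐ x ∂μ, g x ∈ Icc a (a + l)) (h0 : ∫ x, g x ∂μ = 0) (p : α) :
    ∫⁻ x, ENNReal.ofReal (g x ^ 2) ∂μ ≤ ENNReal.ofReal (l ^ 2) * μ {p}ᶜ := by
  rw [← ofReal_integral_eq_lintegral_ofReal (memLp_two_of_ae_mem_Icc hgm hg).integrable_sq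
    (.of_forall fun x => sq_nonneg (g x)), ← ENNReal.ofReal_toReal (measure_ne_top μ {p}ᶜ),
    ← ENNReal.ofReal_mul (sq_nonneg l), ← measureReal_def]
  exact ENNReal.ofReal_le_ofReal (integral_sq_le_of_ae_mem_Icc hgm hg h0 p)

end MeanZero

namespace QCube

variable {n : ℕ} (μ : Measure (EuclideanSpace ℝ (Fin n))) (Q : QCube n)

lemma ae_measure_child_pts_ne_zero :
    ∀ᵐ x ∂μ, ∀ e, x ∈ (Q.child e).pts → μ (Q.child e).pts ≠ 0 := by
  refine ae_all_iff.2 fun e => ?_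
  by_cases h : μ (Q.child e).pts = 0
  · filter_upwards [measure_eq_zero_iff_ae_notMem.1 h] with x hx hx' using absurd hx' hx
  · exact .of_forall fun _ _ => h

variable [IsLocallyFiniteMeasure μ]

lemma ae_mdiff_coord_mem_Icc (i : Fin n) :
    ∀ᵐ x ∂μ.restrict Q.pts, mdiff μ Q (fun z => z i) x ∈
      Icc (Q.a i - muAvg μ Q.pts (fun z => z i)) (Q.a i - muAvg μ Q.pts (fun z => z i) + Q.l) := by
  have hcoord : IntegrableOn (fun z : EuclideanSpace ℝ (Fin n) => z i) Q.pts μ :=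
    Q.integrableOn_pts_of_continuous (by fun_prop)
  refine (ae_restrict_iff' Q.measurableSet_pts).2 ?_
  filter_upwards [ae_measure_child_pts_ne_zero μ Q] with x hx hxQ
  have hchild := mem_child_childIndex hxQ
  obtain ⟨hlow, hhigh⟩ := muAvg_mem_Icc (hx _ hchild) (Q.child _).isBounded_pts.measure_lt_top.ne
    (hcoord.mono_set (child_pts_subset _)) (measurableSet_pts _)
    fun y hy => ⟨(child_pts_subset _ hy i).1, (child_pts_subset _ hy i).2.le⟩
  rw [mdiff_of_mem hxQ]
  constructor <;> linarith

lemma lintegral_mdiff_coord_sq_le (p : EuclideanSpace ℝ (Fin n)) (i : Fin n) :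
    ∫⁻ x, ENNReal.ofReal (mdiff μ Q (fun z => z i) x ^ 2) ∂μ
      ≤ ENNReal.ofReal (Q.l ^ 2) * μ (Q.pts \ {p}) := by
  have : IsFiniteMeasure (μ.restrict Q.pts) :=
    isFiniteMeasure_restrict.2 Q.isBounded_pts.measure_lt_top.ne
  have hzero : ∀ x ∉ Q.pts, mdiff μ Q (fun z => z i) x = 0 := fun _ hx => mdiff_of_notMem hx
  have hmean : ∫ x in Q.pts, mdiff μ Q (fun z => z i) x ∂μ = 0 := by
    rw [setIntegral_eq_integral_of_forall_compl_eq_zero hzero,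
      integral_mdiff μ Q _ (Q.integrableOn_pts_of_continuous (by fun_prop))]
  have hsupp : (fun x => ENNReal.ofReal (mdiff μ Q (fun z => z i) x ^ 2)).support ⊆ Q.pts :=
    fun x hx => by_contra fun hxQ => hx (by simp [hzero x hxQ])
  rw [← setLIntegral_eq_of_support_subset hsupp, sdiff_eq_compl_inter,
    ← Measure.restrict_apply (measurableSet_singleton p).compl]
  exact lintegral_sq_le_of_ae_mem_Icc (measurable_mdiff μ Q _).aestronglyMeasurable
    (ae_mdiff_coord_mem_Icc μ Q i) hmean p

lemma energyTerm_le (p : EuclideanSpace ℝ (Fin n)) :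
    energyTerm μ Q ≤ n * ENNReal.ofReal (Q.l ^ 2) * μ (Q.pts \ {p}) := by
  calc energyTerm μ Q ≤ ∑ _i : Fin n, ENNReal.ofReal (Q.l ^ 2) * μ (Q.pts \ {p}) :=
        Finset.sum_le_sum fun i _ => lintegral_mdiff_coord_sq_le μ Q p i
    _ = n * ENNReal.ofReal (Q.l ^ 2) * μ (Q.pts \ {p}) := by
      rw [Finset.sum_const, Finset.card_univ, Fintype.card_fin, nsmul_eq_mul, mul_assoc]

end QCube

lemma measure_sdiff_singleton_eq_sub_iSup {α : Type*} [MeasurableSpace α]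
    [MeasurableSingletonClass α] {μ : Measure α} {s P : Set α} {q : α} (hq : q ∈ s ∩ P)
    (hq_max : ∀ q' ∈ s ∩ P, μ {q'} ≤ μ {q}) (hs : μ s ≠ ⊤) :
    μ (s \ {q}) = μ s - ⨆ q' ∈ s ∩ P, μ {q'} := by
  have hsub : {q} ⊆ s := singleton_subset_iff.2 hq.1
  rw [le_antisymm (iSup₂_le hq_max) (le_iSup₂_of_le q hq le_rfl)]
  exact measure_sdiff hsub (measurableSet_singleton q).nullMeasurableSet
    (ne_top_of_le_ne_top hs (measure_mono hsub))

theorem statement18_general (n : ℕ)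
    (ω : Measure (EuclideanSpace ℝ (Fin n))) (hω : IsLocallyFiniteMeasure ω)
    (K : QCube n) :
    (∀ p : EuclideanSpace ℝ (Fin n),
      energyTerm ω K ≤ (n : ℝ≥0∞) * ENNReal.ofReal (K.l ^ 2) * ω (K.pts \ {p})) ∧
    (∀ P : Set (EuclideanSpace ℝ (Fin n)), P.Countable →
      ((K.pts ∩ P).Nonempty → ∃ q ∈ K.pts ∩ P, ∀ q' ∈ K.pts ∩ P, ω {q'} ≤ ω {q}) →
      energyTerm ω K
        ≤ (n : ℝ≥0∞) * ENNReal.ofReal (K.l ^ 2) * (ω K.pts - ⨆ q ∈ K.pts ∩ P, ω {q})) := by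
  refine ⟨K.energyTerm_le ω, fun P _ hP_max => ?_⟩
  rcases (K.pts ∩ P).eq_empty_or_nonempty with hempty | hne
  · simp only [hempty, mem_empty_iff_false, iSup_false, iSup_const, bot_eq_zero, tsub_zero]
    exact (K.energyTerm_le ω 0).trans (by gcongr; exact sdiff_subset)
  · obtain ⟨q, hq, hq_max⟩ := hP_max hne
    rw [← measure_sdiff_singleton_eq_sub_iSup hq hq_max K.isBounded_pts.measure_lt_top.ne]
    exact K.energyTerm_le ω q

/-- **'Prepare to puncture' estimate.** For a dyadic cube `K`, any `p ∈ ℝⁿ`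
and `ω̃ = ω − ω({p}) δ_p` (so `ω̃(K) = ω(K ∖ {p})`):
`‖Δ_K^ω x‖²_{L²(ω)} ≤ n ℓ(K)² ω̃(K)`; consequently, for any at most countable `𝔓 ⊆ ℝⁿ`
whose atoms in `K` have `ω`-masses attaining their supremum,
`‖Δ_K^ω x‖²_{L²(ω)} ≤ n ℓ(K)² ω(K, 𝔓)` where `ω(K,𝔓) = ω(K) − sup{ω({q}) : q ∈ K ∩ 𝔓}`. -/
theorem statement18 (n : ℕ) (t : Fin n → ℝ)
    (ω : Measure (EuclideanSpace ℝ (Fin n))) (hω : IsLocallyFiniteMeasure ω)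
    (K : QCube n) (hK : K ∈ dyadicGrid t) :
    (∀ p : EuclideanSpace ℝ (Fin n),
      energyTerm ω K ≤ (n : ℝ≥0∞) * ENNReal.ofReal (K.l ^ 2) * ω (K.pts \ {p})) ∧
    (∀ P : Set (EuclideanSpace ℝ (Fin n)), P.Countable →
      ((K.pts ∩ P).Nonempty → ∃ q ∈ K.pts ∩ P, ∀ q' ∈ K.pts ∩ P, ω {q'} ≤ ω {q}) →
      energyTerm ω K
        ≤ (n : ℝ≥0∞) * ENNReal.ofReal (K.l ^ 2) * (ω K.pts - ⨆ q ∈ K.pts ∩ P, ω {q})) :=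
  statement18_general n ω hω K
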